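/- arXiv:1312.2315 — 3 statements merged into one kernel-verified Lean document; each statement's English description precedes it below -/
import Mathlib

section
/- Under the same Bayes update as above with bounded likelihood ratios C_2, the posterior change per step satisfies |ρ'_i − ρ_i| ≤ ρ_i(1 − ρ_i)(C_2 − 1) for every hypothesis i. -/
/-- One step of Bayes' rule with likelihood ratios bounded by `C₂` changes each posterior
by at most `ρ_i (1 − ρ_i)(C₂ − 1)`. -/
theorem posterior_change_le {M : ℕ} {X L Y : Type*}
    (ρ : Fin M → ℝ) (hρ0 : ∀ i, 0 ≤ ρ i) (hρ1 : ∑ i, ρ i = 1)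
    (f : L → Y → ℝ) (h : Fin M → X → L) (x : X) (y : Y)
    (C2 : ℝ) (hfpos : ∀ l, 0 < f l y) (hC2 : ∀ k l, f k y / f l y ≤ C2)
    (ρ' : Fin M → ℝ)
    (hρ' : ∀ i, ρ' i = ρ i * f (h i x) y / ∑ j, ρ j * f (h j x) y)
    (i : Fin M) :
    |ρ' i - ρ i| ≤ ρ i * (1 - ρ i) * (C2 - 1) := by
  set S : ℝ := ∑ j, ρ j * f (h j x) y with hSdef
  have hg : ∀ j : Fin M, 0 < f (h j x) y := fun j => hfpos _
  have hC2ge1 : 1 ≤ C2 := by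
    have := hC2 (h i x) (h i x)
    rwa [div_self (hg i).ne'] at this
  have hC2pos : 0 < C2 := lt_of_lt_of_le one_pos hC2ge1
  have hmul : ∀ k l : Fin M, f (h k x) y ≤ C2 * f (h l x) y := by
    intro k l
    have := hC2 (h k x) (h l x)
    rwa [div_le_iff₀ (hg l)] at this
  have hSlb : ∀ k : Fin M, f (h k x) y ≤ C2 * S := by
    intro k
    have h1 : f (h k x) y = ∑ j, ρ j * f (h k x) y := by
      rw [← Finset.sum_mul, hρ1, one_mul]
    rw [h1, hSdef, Finset.mul_sum]
    apply Finset.sum_le_sum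
    intro j _
    calc ρ j * f (h k x) y ≤ ρ j * (C2 * f (h j x) y) :=
          mul_le_mul_of_nonneg_left (hmul k j) (hρ0 j)
      _ = C2 * (ρ j * f (h j x) y) := by ring
  have hSpos : 0 < S := by nlinarith [hg i, hSlb i]
  have key : ∀ j : Fin M, |f (h i x) y - f (h j x) y| ≤ (C2 - 1) * S := by
    intro j
    rw [abs_sub_le_iff]
    constructor
    · nlinarith [hmul i j, hSlb i, hg i, hg j,
        mul_le_mul_of_nonneg_left (hSlb i) (by linarith : (0:ℝ) ≤ C2 - 1)]
    · nlinarith [hmul j i, hSlb j, hg i, hg j,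
        mul_le_mul_of_nonneg_left (hSlb j) (by linarith : (0:ℝ) ≤ C2 - 1)]
  have key2 : |f (h i x) y - S| ≤ (1 - ρ i) * ((C2 - 1) * S) := by
    have hgi : f (h i x) y - S = ∑ j, ρ j * (f (h i x) y - f (h j x) y) := by
      rw [hSdef]
      simp only [mul_sub, Finset.sum_sub_distrib, ← Finset.sum_mul, hρ1, one_mul]
    rw [hgi]
    calc |∑ j, ρ j * (f (h i x) y - f (h j x) y)|
        ≤ ∑ j, |ρ j * (f (h i x) y - f (h j x) y)| := Finset.abs_sum_le_sum_abs _ _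
      _ = ∑ j, ρ j * |f (h i x) y - f (h j x) y| := by
          apply Finset.sum_congr rfl
          intro j _
          rw [abs_mul, abs_of_nonneg (hρ0 j)]
      _ = ∑ j ∈ Finset.univ.erase i, ρ j * |f (h i x) y - f (h j x) y| := by
          rw [Finset.sum_erase]
          simp
      _ ≤ ∑ j ∈ Finset.univ.erase i, ρ j * ((C2 - 1) * S) :=
          Finset.sum_le_sum fun j _ => mul_le_mul_of_nonneg_left (key j) (hρ0 j)
      _ = (∑ j ∈ Finset.univ.erase i, ρ j) * ((C2 - 1) * S) := by rw [Finset.sum_mul]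
      _ = (1 - ρ i) * ((C2 - 1) * S) := by
          rw [Finset.sum_erase_eq_sub (Finset.mem_univ i), hρ1]
  have hdiff : ρ' i - ρ i = ρ i * (f (h i x) y - S) / S := by
    rw [hρ' i]
    field_simp
  rw [hdiff, abs_div, abs_of_pos hSpos, abs_mul, abs_of_nonneg (hρ0 i),
    div_le_iff₀ hSpos]
  calc ρ i * |f (h i x) y - S| ≤ ρ i * ((1 - ρ i) * ((C2 - 1) * S)) :=
        mul_le_mul_of_nonneg_left key2 (hρ0 i)
    _ = ρ i * (1 - ρ i) * (C2 - 1) * S := by ring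
end

section
/- Define U(ρ) = Σ_{i=1}^M ρ_i log((1−ρ_i)/ρ_i) for a probability vector ρ over M ≥ 2 hypotheses. If ρ' is obtained from ρ by one Bayes update with likelihood ratios bounded by C_2 (C_2 ≥ 1), and max_i ρ'_i ≥ 1 − δ for some δ ∈ (0, 1/2], then |U(ρ') − U(ρ)| ≤ C_2 (3 + δ log(M − 1)). -/
lemma neg_mul_log_le (x : ℝ) (hx : 0 ≤ x) : -(x * Real.log x) ≤ (Real.exp 1)⁻¹ := by
  rcases hx.eq_or_lt with h0 | hx'
  · simp [← h0, (Real.exp_pos 1).le]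
  · have he : (0:ℝ) < Real.exp 1 := Real.exp_pos 1
    have ht : 0 < (Real.exp 1 * x)⁻¹ := by positivity
    have h1 := Real.log_le_sub_one_of_pos ht
    rw [Real.log_inv, Real.log_mul (ne_of_gt he) (ne_of_gt hx'), Real.log_exp] at h1
    have h2 : -Real.log x ≤ (Real.exp 1 * x)⁻¹ := by linarith
    calc -(x * Real.log x) = x * (-Real.log x) := by ring
      _ ≤ x * (Real.exp 1 * x)⁻¹ := mul_le_mul_of_nonneg_left h2 hx
      _ = (Real.exp 1)⁻¹ := by field_simp

set_option maxHeartbeats 1000000 in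
/-- If `ρ'` is obtained from `ρ` by one Bayes update with likelihood ratios bounded by
`C₂ ≥ 1`, and `max_i ρ'_i ≥ 1 − δ` for some `δ ∈ (0, 1/2]`, then the average
log-likelihood `U(ρ) = Σ_i ρ_i log₂((1−ρ_i)/ρ_i)` satisfies
`|U(ρ') − U(ρ)| ≤ C₂ (3 + δ log₂(M−1))`. -/
theorem U_change_le {M : ℕ} (hM : 2 ≤ M) {X L Y : Type*}
    (ρ : Fin M → ℝ) (hρ0 : ∀ i, 0 ≤ ρ i) (hρ1 : ∑ i, ρ i = 1)
    (f : L → Y → ℝ) (h : Fin M → X → L) (x : X) (y : Y)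
    (C2 : ℝ) (hC2one : 1 ≤ C2)
    (hfpos : ∀ l, 0 < f l y) (hC2 : ∀ k l, f k y / f l y ≤ C2)
    (ρ' : Fin M → ℝ)
    (hρ' : ∀ i, ρ' i = ρ i * f (h i x) y / ∑ j, ρ j * f (h j x) y)
    (δ : ℝ) (hδ : δ ∈ Set.Ioc (0 : ℝ) (1/2))
    (hmax : ∃ i, 1 - δ ≤ ρ' i) :
    |(∑ i, ρ' i * Real.logb 2 ((1 - ρ' i) / ρ' i))
        - (∑ i, ρ i * Real.logb 2 ((1 - ρ i) / ρ i))|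
      ≤ C2 * (3 + δ * Real.logb 2 (M - 1)) := by
  obtain ⟨hδpos, hδhalf⟩ := hδ
  have hlog2 : (0:ℝ) < Real.log 2 := Real.log_pos (by norm_num)
  have hC2pos : (0:ℝ) < C2 := lt_of_lt_of_le one_pos hC2one
  set F : Fin M → ℝ := fun i => f (h i x) y with hF
  have hFpos : ∀ i, 0 < F i := fun i => hfpos _
  have hFle : ∀ i j, F i ≤ C2 * F j := by
    intro i j
    have h1 := hC2 (h i x) (h j x)
    rw [div_le_iff₀ (hfpos (h j x))] at h1
    simpa [hF, mul_comm] using h1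
  set S : ℝ := ∑ j, ρ j * F j with hS
  have hρle1 : ∀ i, ρ i ≤ 1 := by
    intro i
    rw [← hρ1]
    exact Finset.single_le_sum (fun j _ => hρ0 j) (Finset.mem_univ i)
  have hSpos : 0 < S := by
    have hex : ∃ j, 0 < ρ j := by
      by_contra hcon
      push_neg at hcon
      have : ∑ i, ρ i = 0 :=
        Finset.sum_eq_zero (fun i _ => le_antisymm (hcon i) (hρ0 i))
      rw [hρ1] at this; norm_num at this
    obtain ⟨j, hj⟩ := hex
    exact Finset.sum_pos' (fun i _ => mul_nonneg (hρ0 i) (hFpos i).le)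
      ⟨j, Finset.mem_univ j, mul_pos hj (hFpos j)⟩
  have hSF : ∀ i, S ≤ C2 * F i := by
    intro i
    calc S = ∑ j, ρ j * F j := hS
      _ ≤ ∑ j, ρ j * (C2 * F i) :=
        Finset.sum_le_sum (fun j _ => mul_le_mul_of_nonneg_left (hFle j i) (hρ0 j))
      _ = C2 * F i := by rw [← Finset.sum_mul, hρ1, one_mul]
  have hFS : ∀ i, F i ≤ C2 * S := by
    intro i
    calc F i = ∑ j, ρ j * F i := by rw [← Finset.sum_mul, hρ1, one_mul]
      _ ≤ ∑ j, ρ j * (C2 * F j) :=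
        Finset.sum_le_sum (fun j _ => mul_le_mul_of_nonneg_left (hFle i j) (hρ0 j))
      _ = C2 * S := by rw [hS, Finset.mul_sum]; exact Finset.sum_congr rfl (fun j _ => by ring)
  have hρ'eq : ∀ i, ρ' i = ρ i * F i / S := hρ'
  have hρ'0 : ∀ i, 0 ≤ ρ' i := by
    intro i; rw [hρ'eq i]
    have := hρ0 i; have := (hFpos i).le
    positivity
  have hρ'1 : ∑ i, ρ' i = 1 := by
    rw [Finset.sum_congr rfl (fun i _ => hρ'eq i), ← Finset.sum_div, ← hS,
      div_self hSpos.ne']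
  have hρ'le1 : ∀ i, ρ' i ≤ 1 := by
    intro i
    rw [← hρ'1]
    exact Finset.single_le_sum (fun j _ => hρ'0 j) (Finset.mem_univ i)
  have hup : ∀ i, ρ' i ≤ C2 * ρ i := by
    intro i
    rw [hρ'eq i, div_le_iff₀ hSpos]
    calc ρ i * F i ≤ ρ i * (C2 * S) := mul_le_mul_of_nonneg_left (hFS i) (hρ0 i)
      _ = C2 * ρ i * S := by ring
  have hlow : ∀ i, ρ i ≤ C2 * ρ' i := by
    intro i
    rw [hρ'eq i, mul_div_assoc', le_div_iff₀ hSpos]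
    calc ρ i * S ≤ ρ i * (C2 * F i) := mul_le_mul_of_nonneg_left (hSF i) (hρ0 i)
      _ = C2 * (ρ i * F i) := by ring
  have herase : ∀ (g : Fin M → ℝ), (∑ i, g i) = 1 → ∀ i,
      ∑ j ∈ Finset.univ.erase i, g j = 1 - g i := by
    intro g hg i
    have := Finset.sum_erase_add Finset.univ g (Finset.mem_univ i)
    rw [hg] at this
    linarith
  have hcup : ∀ i, 1 - ρ' i ≤ C2 * (1 - ρ i) := by
    intro i
    rw [← herase ρ' hρ'1 i, ← herase ρ hρ1 i, Finset.mul_sum]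
    exact Finset.sum_le_sum (fun j _ => hup j)
  have hclow : ∀ i, 1 - ρ i ≤ C2 * (1 - ρ' i) := by
    intro i
    rw [← herase ρ' hρ'1 i, ← herase ρ hρ1 i, Finset.mul_sum]
    exact Finset.sum_le_sum (fun j _ => hlow j)
  set ℓ : ℝ → ℝ := fun z => Real.log ((1 - z) / z) with hℓ
  -- Part A : |ρ i * (ℓ (ρ' i) - ℓ (ρ i))| ≤ ρ i * log C2
  have hA : ∀ i, |ρ i * (ℓ (ρ' i) - ℓ (ρ i))| ≤ ρ i * Real.log C2 := by
    intro i
    have hlogC2 : 0 ≤ Real.log C2 := Real.log_nonneg hC2one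
    rcases (hρ0 i).eq_or_lt with h0 | hpos
    · simp [← h0]
    rcases eq_or_lt_of_le (hρle1 i) with h1 | h1
    · have hcu := hcup i
      have h'1 : ρ' i = 1 := by nlinarith [hρ'le1 i]
      rw [h1, h'1]
      simp only [hℓ]
      norm_num
      exact hlogC2
    · have h'pos : 0 < ρ' i := by nlinarith [hlow i]
      have h'lt1 : ρ' i < 1 := by nlinarith [hclow i]
      have hρ'S : ρ' i * S = ρ i * F i := by
        rw [hρ'eq i]; field_simp
      have h1mρ' : (1 - ρ' i) * S = ∑ j ∈ Finset.univ.erase i, ρ j * F j := by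
        rw [hρ'eq i, sub_mul, one_mul, div_mul_cancel₀ _ hSpos.ne']
        have hh := Finset.sum_erase_add Finset.univ (fun j => ρ j * F j)
          (Finset.mem_univ i)
        simp only [← hS] at hh
        linarith
      have key1 : F i * (1 - ρ i) ≤ C2 * ∑ j ∈ Finset.univ.erase i, ρ j * F j := by
        rw [← herase ρ hρ1 i, Finset.mul_sum, Finset.mul_sum]
        apply Finset.sum_le_sum
        intro j _
        have := hFle i j
        nlinarith [hρ0 j]
      have key2 : (∑ j ∈ Finset.univ.erase i, ρ j * F j) ≤ C2 * (F i * (1 - ρ i)) := by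
        rw [← herase ρ hρ1 i, Finset.mul_sum, Finset.mul_sum]
        apply Finset.sum_le_sum
        intro j _
        have := hFle j i
        nlinarith [hρ0 j]
      have claim1 : ρ' i * (1 - ρ i) ≤ C2 * (ρ i * (1 - ρ' i)) := by
        have hc : ρ' i * (1 - ρ i) * S ≤ C2 * (ρ i * (1 - ρ' i)) * S := by
          calc ρ' i * (1 - ρ i) * S = ρ i * (F i * (1 - ρ i)) := by
                rw [show ρ' i * (1 - ρ i) * S = ρ' i * S * (1 - ρ i) by ring, hρ'S]; ring
            _ ≤ ρ i * (C2 * ∑ j ∈ Finset.univ.erase i, ρ j * F j) :=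
                mul_le_mul_of_nonneg_left key1 (hρ0 i)
            _ = C2 * (ρ i * ((1 - ρ' i) * S)) := by rw [h1mρ']; ring
            _ = C2 * (ρ i * (1 - ρ' i)) * S := by ring
        exact le_of_mul_le_mul_right hc hSpos
      have claim2 : ρ i * (1 - ρ' i) ≤ C2 * (ρ' i * (1 - ρ i)) := by
        have hc : ρ i * (1 - ρ' i) * S ≤ C2 * (ρ' i * (1 - ρ i)) * S := by
          calc ρ i * (1 - ρ' i) * S = ρ i * ∑ j ∈ Finset.univ.erase i, ρ j * F j := by
                rw [show ρ i * (1 - ρ' i) * S = ρ i * ((1 - ρ' i) * S) by ring, h1mρ']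
            _ ≤ ρ i * (C2 * (F i * (1 - ρ i))) :=
                mul_le_mul_of_nonneg_left key2 (hρ0 i)
            _ = C2 * (ρ i * F i * (1 - ρ i)) := by ring
            _ = C2 * (ρ' i * (1 - ρ i)) * S := by rw [← hρ'S]; ring
        exact le_of_mul_le_mul_right hc hSpos
      have ha : 0 < (1 - ρ' i) / ρ' i := by
        have : 0 < 1 - ρ' i := by linarith
        positivity
      have hb : 0 < (1 - ρ i) / ρ i := by
        have : 0 < 1 - ρ i := by linarith
        positivity
      set r : ℝ := ((1 - ρ' i) / ρ' i) / ((1 - ρ i) / ρ i) with hrdef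
      have hrpos : 0 < r := div_pos ha hb
      have hr_eq : r = (ρ i * (1 - ρ' i)) / (ρ' i * (1 - ρ i)) := by
        rw [hrdef]
        field_simp
      have hdenpos : 0 < ρ' i * (1 - ρ i) := by nlinarith
      have hr_le : r ≤ C2 := by
        rw [hr_eq, div_le_iff₀ hdenpos]
        exact claim2
      have hr_ge : C2⁻¹ ≤ r := by
        rw [hr_eq, le_div_iff₀ hdenpos, inv_mul_le_iff₀ hC2pos]
        exact claim1
      have hdiff : ℓ (ρ' i) - ℓ (ρ i) = Real.log r := by
        simp only [hℓ]
        rw [hrdef, Real.log_div ha.ne' hb.ne']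
      have hub : Real.log r ≤ Real.log C2 := Real.log_le_log hrpos hr_le
      have hlb : -Real.log C2 ≤ Real.log r := by
        have := Real.log_le_log (by positivity : (0:ℝ) < C2⁻¹) hr_ge
        rwa [Real.log_inv] at this
      rw [hdiff, abs_mul, abs_of_nonneg (hρ0 i)]
      exact mul_le_mul_of_nonneg_left (abs_le.mpr ⟨hlb, hub⟩) (hρ0 i)
  -- Part B
  obtain ⟨i₀, hi₀⟩ := hmax
  have hC21 : (0:ℝ) ≤ C2 - 1 := by linarith
  have hi₀half : (1:ℝ)/2 ≤ ρ' i₀ := by linarith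
  have hBstar : |(ρ' i₀ - ρ i₀) * ℓ (ρ' i₀)| ≤ (C2 - 1) * (Real.exp 1)⁻¹ := by
    rcases eq_or_lt_of_le (hρ'le1 i₀) with h1 | h1
    · rw [h1]
      simp only [hℓ]
      norm_num
      exact mul_nonneg hC21 (by positivity)
    · have hz1 : 0 < 1 - ρ' i₀ := by linarith
      have hzpos : 0 < ρ' i₀ := by linarith
      have hd : |ρ' i₀ - ρ i₀| ≤ (C2 - 1) * (1 - ρ' i₀) := by
        have h2 := hcup i₀
        have h3 := hclow i₀
        have hlower : ρ i₀ - ρ' i₀ ≤ (C2 - 1) * (1 - ρ' i₀) := by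
          nlinarith [h2, hC2pos, mul_nonneg hz1.le (sq_nonneg (C2 - 1))]
        rw [abs_le]
        constructor
        · linarith
        · linarith
      have hℓval : ℓ (ρ' i₀) = Real.log (1 - ρ' i₀) - Real.log (ρ' i₀) := by
        simp only [hℓ]
        exact Real.log_div hz1.ne' hzpos.ne'
      have hlz : Real.log (ρ' i₀) ≤ 0 := Real.log_nonpos hzpos.le (hρ'le1 i₀)
      have hl1 : Real.log (1 - ρ' i₀) ≤ 0 := Real.log_nonpos hz1.le (by linarith)
      have hmono : Real.log (1 - ρ' i₀) ≤ Real.log (ρ' i₀) :=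
        Real.log_le_log hz1 (by linarith)
      have habs : |ℓ (ρ' i₀)| ≤ -Real.log (1 - ρ' i₀) := by
        rw [hℓval, abs_le]
        constructor <;> linarith
      calc |(ρ' i₀ - ρ i₀) * ℓ (ρ' i₀)| = |ρ' i₀ - ρ i₀| * |ℓ (ρ' i₀)| := abs_mul _ _
        _ ≤ ((C2 - 1) * (1 - ρ' i₀)) * (-Real.log (1 - ρ' i₀)) :=
            mul_le_mul hd habs (abs_nonneg _) (mul_nonneg hC21 hz1.le)
        _ = (C2 - 1) * (-((1 - ρ' i₀) * Real.log (1 - ρ' i₀))) := by ring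
        _ ≤ (C2 - 1) * (Real.exp 1)⁻¹ :=
            mul_le_mul_of_nonneg_left (neg_mul_log_le _ hz1.le) hC21
  have hσeq : ∑ j ∈ Finset.univ.erase i₀, ρ' j = 1 - ρ' i₀ := herase ρ' hρ'1 i₀
  have hT : ∀ i ∈ Finset.univ.erase i₀, ρ' i ≤ δ := by
    intro i hi
    have h1 : ρ' i ≤ ∑ j ∈ Finset.univ.erase i₀, ρ' j :=
      Finset.single_le_sum (fun j _ => hρ'0 j) hi
    rw [hσeq] at h1
    linarith
  have hBT : ∀ i ∈ Finset.univ.erase i₀,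
      |(ρ' i - ρ i) * ℓ (ρ' i)| ≤ (C2 - 1) * (-(ρ' i * Real.log (ρ' i))) := by
    intro i hi
    have hle : ρ' i ≤ 1/2 := le_trans (hT i hi) hδhalf
    rcases (hρ'0 i).eq_or_lt with h0 | hzpos
    · have hρi : ρ i = 0 := by nlinarith [hlow i, hρ0 i]
      rw [← h0, hρi]
      simp
    · have hz1 : 0 < 1 - ρ' i := by linarith
      have hd : |ρ' i - ρ i| ≤ (C2 - 1) * ρ' i := by
        have h2 := hup i
        have h3 := hlow i
        have hupper : ρ' i - ρ i ≤ (C2 - 1) * ρ' i := by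
          nlinarith [h2, hC2pos, mul_nonneg hzpos.le (sq_nonneg (C2 - 1))]
        rw [abs_le]
        constructor
        · linarith
        · linarith
      have hℓval : ℓ (ρ' i) = Real.log (1 - ρ' i) - Real.log (ρ' i) := by
        simp only [hℓ]
        exact Real.log_div hz1.ne' hzpos.ne'
      have hl1 : Real.log (1 - ρ' i) ≤ 0 := Real.log_nonpos hz1.le (by linarith)
      have hl2 : Real.log (ρ' i) ≤ Real.log (1 - ρ' i) :=
        Real.log_le_log hzpos (by linarith)
      have habs : |ℓ (ρ' i)| ≤ -Real.log (ρ' i) := by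
        rw [hℓval, abs_le]
        constructor <;> linarith
      calc |(ρ' i - ρ i) * ℓ (ρ' i)| = |ρ' i - ρ i| * |ℓ (ρ' i)| := abs_mul _ _
        _ ≤ ((C2 - 1) * ρ' i) * (-Real.log (ρ' i)) :=
            mul_le_mul hd habs (abs_nonneg _) (mul_nonneg hC21 (hρ'0 i))
        _ = (C2 - 1) * (-(ρ' i * Real.log (ρ' i))) := by ring
  have hcard : ((Finset.univ.erase i₀).card : ℝ) = (M : ℝ) - 1 := by
    rw [Finset.card_erase_of_mem (Finset.mem_univ i₀), Finset.card_univ, Fintype.card_fin,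
      Nat.cast_sub (by omega)]
    norm_num
  have hM1 : (1:ℝ) ≤ (M:ℝ) - 1 := by
    have h2 : (2:ℝ) ≤ (M:ℝ) := by exact_mod_cast hM
    linarith
  have hlogM : 0 ≤ Real.log ((M:ℝ) - 1) := Real.log_nonneg hM1
  have hσ0 : 0 ≤ 1 - ρ' i₀ := by linarith [hρ'le1 i₀]
  have hσδ : 1 - ρ' i₀ ≤ δ := by linarith
  have hent : ∑ i ∈ Finset.univ.erase i₀, (-(ρ' i * Real.log (ρ' i)))
      ≤ δ * Real.log ((M : ℝ) - 1) + (Real.exp 1)⁻¹ := by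
    rcases hσ0.eq_or_lt with hσz | hσpos
    · have hall : ∀ j ∈ Finset.univ.erase i₀, ρ' j = 0 := by
        intro j hj
        have h1 : ρ' j ≤ ∑ k ∈ Finset.univ.erase i₀, ρ' k :=
          Finset.single_le_sum (fun k _ => hρ'0 k) hj
        rw [hσeq] at h1
        exact le_antisymm (by linarith) (hρ'0 j)
      rw [Finset.sum_eq_zero (fun j hj => by rw [hall j hj]; simp)]
      have : (0:ℝ) ≤ δ * Real.log ((M:ℝ) - 1) := mul_nonneg hδpos.le hlogM
      have he : (0:ℝ) ≤ (Real.exp 1)⁻¹ := by positivity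
      linarith
    · set σ : ℝ := 1 - ρ' i₀ with hσdef
      set c : ℝ := σ / ((M:ℝ) - 1) with hcdef
      have hMnz : ((M:ℝ) - 1) ≠ 0 := by linarith
      have hcpos : 0 < c := div_pos hσpos (by linarith)
      have hper : ∀ j ∈ Finset.univ.erase i₀,
          -(ρ' j * Real.log (ρ' j)) ≤ c - ρ' j - ρ' j * Real.log c := by
        intro j hj
        rcases (hρ'0 j).eq_or_lt with h0 | hp
        · rw [← h0]
          simp
          linarith
        · have hq : 0 < c / ρ' j := div_pos hcpos hp
          have h2 := Real.log_le_sub_one_of_pos hq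
          rw [Real.log_div hcpos.ne' hp.ne'] at h2
          have h3 : ρ' j * (Real.log c - Real.log (ρ' j)) ≤ ρ' j * (c / ρ' j - 1) :=
            mul_le_mul_of_nonneg_left h2 hp.le
          have h4 : ρ' j * (c / ρ' j - 1) = c - ρ' j := by
            field_simp
          nlinarith [h3, h4]
      have hsum := Finset.sum_le_sum hper
      have hrhs : ∑ j ∈ Finset.univ.erase i₀, (c - ρ' j - ρ' j * Real.log c)
          = ((Finset.univ.erase i₀).card : ℝ) * c - σ - σ * Real.log c := by
        rw [Finset.sum_sub_distrib, Finset.sum_sub_distrib, Finset.sum_const,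
          nsmul_eq_mul, ← Finset.sum_mul, hσeq]
      have hcc : ((Finset.univ.erase i₀).card : ℝ) * c = σ := by
        rw [hcard, hcdef]
        field_simp
      have hlogc : Real.log c = Real.log σ - Real.log ((M:ℝ) - 1) :=
        Real.log_div hσpos.ne' hMnz
      have h5 : σ * Real.log ((M:ℝ)-1) ≤ δ * Real.log ((M:ℝ)-1) :=
        mul_le_mul_of_nonneg_right hσδ hlogM
      have h6 : -(σ * Real.log σ) ≤ (Real.exp 1)⁻¹ := neg_mul_log_le σ hσ0
      calc ∑ i ∈ Finset.univ.erase i₀, (-(ρ' i * Real.log (ρ' i)))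
          ≤ ((Finset.univ.erase i₀).card : ℝ) * c - σ - σ * Real.log c := by
            rw [← hrhs]; exact hsum
        _ = - (σ * Real.log c) := by rw [hcc]; ring
        _ = σ * Real.log ((M:ℝ)-1) + (-(σ * Real.log σ)) := by rw [hlogc]; ring
        _ ≤ δ * Real.log ((M:ℝ)-1) + (Real.exp 1)⁻¹ := add_le_add h5 h6
  -- assemble
  have hDsplit : (∑ i, ρ' i * ℓ (ρ' i)) - (∑ i, ρ i * ℓ (ρ i))
      = (∑ i, ρ i * (ℓ (ρ' i) - ℓ (ρ i))) + ∑ i, (ρ' i - ρ i) * ℓ (ρ' i) := by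
    rw [← Finset.sum_add_distrib, ← Finset.sum_sub_distrib]
    exact Finset.sum_congr rfl (fun i _ => by ring)
  have hAsum : |∑ i, ρ i * (ℓ (ρ' i) - ℓ (ρ i))| ≤ Real.log C2 := by
    calc |∑ i, ρ i * (ℓ (ρ' i) - ℓ (ρ i))| ≤ ∑ i, |ρ i * (ℓ (ρ' i) - ℓ (ρ i))| :=
        Finset.abs_sum_le_sum_abs _ _
      _ ≤ ∑ i, ρ i * Real.log C2 := Finset.sum_le_sum (fun i _ => hA i)
      _ = Real.log C2 := by rw [← Finset.sum_mul, hρ1, one_mul]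
  have hBsum : |∑ i, (ρ' i - ρ i) * ℓ (ρ' i)|
      ≤ (C2 - 1) * (Real.exp 1)⁻¹
        + (C2 - 1) * (δ * Real.log ((M:ℝ)-1) + (Real.exp 1)⁻¹) := by
    have hsplit : ∑ i, (ρ' i - ρ i) * ℓ (ρ' i)
        = (ρ' i₀ - ρ i₀) * ℓ (ρ' i₀)
          + ∑ i ∈ Finset.univ.erase i₀, (ρ' i - ρ i) * ℓ (ρ' i) :=
      (Finset.add_sum_erase Finset.univ _ (Finset.mem_univ i₀)).symm
    have hTsum : ∑ i ∈ Finset.univ.erase i₀, |(ρ' i - ρ i) * ℓ (ρ' i)|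
        ≤ (C2 - 1) * (δ * Real.log ((M:ℝ)-1) + (Real.exp 1)⁻¹) := by
      calc ∑ i ∈ Finset.univ.erase i₀, |(ρ' i - ρ i) * ℓ (ρ' i)|
          ≤ ∑ i ∈ Finset.univ.erase i₀, (C2 - 1) * (-(ρ' i * Real.log (ρ' i))) :=
            Finset.sum_le_sum hBT
        _ = (C2 - 1) * ∑ i ∈ Finset.univ.erase i₀, (-(ρ' i * Real.log (ρ' i))) := by
            rw [Finset.mul_sum]
        _ ≤ (C2 - 1) * (δ * Real.log ((M:ℝ)-1) + (Real.exp 1)⁻¹) :=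
            mul_le_mul_of_nonneg_left hent hC21
    calc |∑ i, (ρ' i - ρ i) * ℓ (ρ' i)|
        ≤ |(ρ' i₀ - ρ i₀) * ℓ (ρ' i₀)|
          + |∑ i ∈ Finset.univ.erase i₀, (ρ' i - ρ i) * ℓ (ρ' i)| := by
          rw [hsplit]; exact abs_add_le _ _
      _ ≤ (C2 - 1) * (Real.exp 1)⁻¹
          + (C2 - 1) * (δ * Real.log ((M:ℝ)-1) + (Real.exp 1)⁻¹) := by
          have := Finset.abs_sum_le_sum_abs
            (fun i => (ρ' i - ρ i) * ℓ (ρ' i)) (Finset.univ.erase i₀)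
          exact add_le_add hBstar (le_trans this hTsum)
  have hD : |(∑ i, ρ' i * ℓ (ρ' i)) - (∑ i, ρ i * ℓ (ρ i))|
      ≤ Real.log C2 + ((C2 - 1) * (Real.exp 1)⁻¹
        + (C2 - 1) * (δ * Real.log ((M:ℝ)-1) + (Real.exp 1)⁻¹)) := by
    rw [hDsplit]
    exact le_trans (abs_add_le _ _) (add_le_add hAsum hBsum)
  have hgoal1 : ∀ (g : Fin M → ℝ),
      ∑ i, g i * Real.logb 2 ((1 - g i) / g i) = (∑ i, g i * ℓ (g i)) / Real.log 2 := by
    intro g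
    rw [Finset.sum_div]
    refine Finset.sum_congr rfl (fun i _ => ?_)
    simp only [hℓ, Real.logb]
    ring
  rw [hgoal1 ρ', hgoal1 ρ, div_sub_div_same, Real.logb, abs_div, abs_of_pos hlog2,
    div_le_iff₀ hlog2]
  have hrhs2 : C2 * (3 + δ * (Real.log ((M:ℝ)-1) / Real.log 2)) * Real.log 2
      = 3 * C2 * Real.log 2 + C2 * (δ * Real.log ((M:ℝ)-1)) := by
    field_simp
  rw [hrhs2]
  have hlogC2' : Real.log C2 ≤ C2 - 1 := by
    have := Real.log_le_sub_one_of_pos hC2pos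
    linarith
  have hexp : (Real.exp 1)⁻¹ ≤ 0.38 := by
    have h27 : (2.7:ℝ) < Real.exp 1 := by
      have := Real.exp_one_gt_d9
      linarith
    have hgt : (0:ℝ) < Real.exp 1 := Real.exp_pos 1
    rw [inv_le_comm₀ hgt (by norm_num)]
    have : (0.38:ℝ)⁻¹ ≤ 2.7 := by norm_num
    linarith
  have hlog2' : (0.69:ℝ) ≤ Real.log 2 := by
    have := Real.log_two_gt_d9
    linarith
  have hδL : 0 ≤ δ * Real.log ((M:ℝ)-1) := mul_nonneg hδpos.le hlogM
  have p1 : (C2 - 1) * (Real.exp 1)⁻¹ ≤ (C2 - 1) * 0.38 :=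
    mul_le_mul_of_nonneg_left hexp hC21
  have q1 : (C2 - 1) * (δ * Real.log ((M:ℝ)-1) + (Real.exp 1)⁻¹)
      = (C2 - 1) * (δ * Real.log ((M:ℝ)-1)) + (C2 - 1) * (Real.exp 1)⁻¹ := by ring
  have q2 : (C2 - 1) * (δ * Real.log ((M:ℝ)-1)) ≤ C2 * (δ * Real.log ((M:ℝ)-1)) :=
    mul_le_mul_of_nonneg_right (by linarith) hδL
  have q3 : 3 * C2 * 0.69 ≤ 3 * C2 * Real.log 2 :=
    mul_le_mul_of_nonneg_left hlog2' (by positivity)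
  linarith [hD, p1, q2, q3]
end

section
/- For any sample query policy, the expected one-step change in the average log-likelihood U satisfies E[U(ρ(t+1)) | F(t)] = U(ρ(t)) − Σ_x P(X(t)=x) EJS(ρ(t), x), where EJS(ρ, x) = Σ_i ρ_i D(f_{h_i(x)} ‖ Σ_{j≠i} (ρ_j/(1−ρ_i)) f_{h_j(x)}). -/
/-- Kullback–Leibler divergence (base 2) between densities on a finite space. -/
noncomputable def KL {Y : Type*} [Fintype Y] (p q : Y → ℝ) : ℝ :=
  ∑ y, p y * Real.logb 2 (p y / q y)

/-- Extrinsic Jensen–Shannon divergence of sample `x` at belief `ρ`. -/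
noncomputable def EJS {M : ℕ} {X L Y : Type*} [Fintype Y]
    (f : L → Y → ℝ) (h : Fin M → X → L) (ρ : Fin M → ℝ) (x : X) : ℝ :=
  ∑ i, ρ i * KL (f (h i x))
    (fun y => ∑ j ∈ Finset.univ.erase i, (ρ j / (1 - ρ i)) * f (h j x) y)

/-- For any (randomized) sample query rule `P` over `X`, the expected one-step change of
the average log-likelihood `U` equals minus the expected EJS divergence:
`E[U(ρ')] = U(ρ) − Σ_x P(x) EJS(ρ, x)`. -/
theorem expected_U_decrease_eq_EJS
    {M : ℕ} (hM : 2 ≤ M) {X L Y : Type*} [Fintype X] [Fintype Y]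
    (f : L → Y → ℝ) (hfpos : ∀ l y, 0 < f l y) (hf1 : ∀ l, ∑ y, f l y = 1)
    (h : Fin M → X → L)
    (ρ : Fin M → ℝ) (hρ0 : ∀ i, 0 < ρ i) (hρ1 : ∑ i, ρ i = 1)
    (P : X → ℝ) (hP0 : ∀ x, 0 ≤ P x) (hP1 : ∑ x, P x = 1)
    (U : (Fin M → ℝ) → ℝ)
    (hU : ∀ p : Fin M → ℝ, U p = ∑ i, p i * Real.logb 2 ((1 - p i) / p i))
    (Φ : X → Y → Fin M → ℝ)
    (hΦ : ∀ x y i, Φ x y i = ρ i * f (h i x) y / ∑ j, ρ j * f (h j x) y) :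
    ∑ x, P x * ∑ y, (∑ i, ρ i * f (h i x) y) * U (Φ x y)
      = U ρ - ∑ x, P x * EJS f h ρ x := by
  classical
  have key : ∀ x : X, ∑ y, (∑ i, ρ i * f (h i x) y) * U (Φ x y)
      = U ρ - EJS f h ρ x := by
    intro x
    have hgpos : ∀ (i : Fin M) y, 0 < f (h i x) y := fun i y => hfpos _ y
    have hgsum : ∀ i : Fin M, ∑ y, f (h i x) y = 1 := fun i => hf1 _
    set S : Fin M → Y → ℝ :=
      fun i y => ∑ j ∈ Finset.univ.erase i, ρ j * f (h j x) y with hSdef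
    have herase_ne : ∀ i : Fin M, (Finset.univ.erase i).Nonempty := by
      intro i
      rw [← Finset.card_pos, Finset.card_erase_of_mem (Finset.mem_univ i)]
      simp only [Finset.card_univ, Fintype.card_fin]
      omega
    have hSpos : ∀ i y, 0 < S i y := by
      intro i y
      exact Finset.sum_pos (fun j _ => mul_pos (hρ0 j) (hgpos j y)) (herase_ne i)
    have hsplit : ∀ (i : Fin M) y,
        ∑ j, ρ j * f (h j x) y = ρ i * f (h i x) y + S i y := by
      intro i y
      exact (Finset.add_sum_erase _ _ (Finset.mem_univ i)).symm
    have hπpos : ∀ y, 0 < ∑ j, ρ j * f (h j x) y := by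
      intro y
      have i0 : Fin M := ⟨0, by omega⟩
      rw [hsplit i0 y]
      exact add_pos (mul_pos (hρ0 i0) (hgpos i0 y)) (hSpos i0 y)
    have hs : ∀ i, (1:ℝ) - ρ i = ∑ j ∈ Finset.univ.erase i, ρ j := by
      intro i
      have := (Finset.add_sum_erase Finset.univ ρ (Finset.mem_univ i)).symm
      rw [hρ1] at this
      linarith
    have hspos : ∀ i, 0 < 1 - ρ i := by
      intro i; rw [hs i]
      exact Finset.sum_pos (fun j _ => hρ0 j) (herase_ne i)
    -- the common form
    set E : Fin M → ℝ := fun i =>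
      ρ i * (∑ y, f (h i x) y * Real.logb 2 (S i y)) - ρ i * Real.logb 2 (ρ i)
        - ρ i * (∑ y, f (h i x) y * Real.logb 2 (f (h i x) y)) with hEdef
    have hL : ∑ y, (∑ i, ρ i * f (h i x) y) * U (Φ x y) = ∑ i, E i := by
      have hterm : ∀ (y : Y) (i : Fin M),
          (∑ j, ρ j * f (h j x) y) * (Φ x y i * Real.logb 2 ((1 - Φ x y i) / Φ x y i))
          = ρ i * f (h i x) y *
              (Real.logb 2 (S i y) - Real.logb 2 (ρ i) - Real.logb 2 (f (h i x) y)) := by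
        intro y i
        have hπne : (∑ j, ρ j * f (h j x) y) ≠ 0 := (hπpos y).ne'
        have hΦi : Φ x y i = ρ i * f (h i x) y / ∑ j, ρ j * f (h j x) y := hΦ x y i
        have h1 : 1 - Φ x y i = S i y / ∑ j, ρ j * f (h j x) y := by
          rw [hΦi]
          field_simp
          linarith [hsplit i y]
        have h2 : (1 - Φ x y i) / Φ x y i = S i y / (ρ i * f (h i x) y) := by
          rw [h1, hΦi, div_div_div_eq, mul_comm (S i y) _, mul_div_mul_left _ _ hπne]
        have h3 : Real.logb 2 (S i y / (ρ i * f (h i x) y))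
            = Real.logb 2 (S i y) - Real.logb 2 (ρ i) - Real.logb 2 (f (h i x) y) := by
          rw [Real.logb_div (hSpos i y).ne' (mul_pos (hρ0 i) (hgpos i y)).ne',
            Real.logb_mul (hρ0 i).ne' (hgpos i y).ne']
          ring
        rw [h2, h3, hΦi]
        field_simp
      calc ∑ y, (∑ i, ρ i * f (h i x) y) * U (Φ x y)
          = ∑ y, ∑ i, (∑ j, ρ j * f (h j x) y) *
              (Φ x y i * Real.logb 2 ((1 - Φ x y i) / Φ x y i)) := by
            refine Finset.sum_congr rfl fun y _ => ?_
            rw [hU, Finset.mul_sum]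
        _ = ∑ y, ∑ i, ρ i * f (h i x) y *
              (Real.logb 2 (S i y) - Real.logb 2 (ρ i) - Real.logb 2 (f (h i x) y)) := by
            refine Finset.sum_congr rfl fun y _ => Finset.sum_congr rfl fun i _ => hterm y i
        _ = ∑ i, ∑ y, ρ i * f (h i x) y *
              (Real.logb 2 (S i y) - Real.logb 2 (ρ i) - Real.logb 2 (f (h i x) y)) :=
            Finset.sum_comm
        _ = ∑ i, E i := by
            refine Finset.sum_congr rfl fun i _ => ?_
            have hmid : ∑ y, ρ i * f (h i x) y * Real.logb 2 (ρ i)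
                = ρ i * Real.logb 2 (ρ i) := by
              have : ∑ y, ρ i * f (h i x) y * Real.logb 2 (ρ i)
                  = (∑ y, f (h i x) y) * (ρ i * Real.logb 2 (ρ i)) := by
                rw [Finset.sum_mul]
                exact Finset.sum_congr rfl fun y _ => by ring
              rw [this, hgsum, one_mul]
            simp only [hEdef, mul_sub, Finset.sum_sub_distrib]
            rw [hmid, Finset.mul_sum, Finset.mul_sum]
            refine congrArg₂ _ (congrArg₂ _ ?_ rfl) ?_
            · exact Finset.sum_congr rfl fun y _ => by ring
            · exact Finset.sum_congr rfl fun y _ => by ring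
    have hR : U ρ - EJS f h ρ x = ∑ i, E i := by
      have hq : ∀ (i : Fin M) (y : Y),
          ∑ j ∈ Finset.univ.erase i, (ρ j / (1 - ρ i)) * f (h j x) y
            = S i y / (1 - ρ i) := by
        intro i y
        rw [hSdef, Finset.sum_div]
        exact Finset.sum_congr rfl fun j _ => by ring
      have hKL : ∀ i : Fin M,
          KL (f (h i x)) (fun y => ∑ j ∈ Finset.univ.erase i, (ρ j / (1 - ρ i)) * f (h j x) y)
          = (∑ y, f (h i x) y * Real.logb 2 (f (h i x) y))
            - (∑ y, f (h i x) y * Real.logb 2 (S i y)) + Real.logb 2 (1 - ρ i) := by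
        intro i
        have : KL (f (h i x)) (fun y => ∑ j ∈ Finset.univ.erase i, (ρ j / (1 - ρ i)) * f (h j x) y)
            = ∑ y, f (h i x) y * (Real.logb 2 (f (h i x) y) - Real.logb 2 (S i y)
                + Real.logb 2 (1 - ρ i)) := by
          rw [KL]
          refine Finset.sum_congr rfl fun y _ => ?_
          rw [hq i y]
          rw [div_div_eq_mul_div, Real.logb_div (mul_pos (hgpos i y) (hspos i)).ne' (hSpos i y).ne',
            Real.logb_mul (hgpos i y).ne' (hspos i).ne']
          ring
        rw [this]
        have hconst : ∑ y, f (h i x) y * Real.logb 2 (1 - ρ i)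
            = Real.logb 2 (1 - ρ i) := by
          rw [← Finset.sum_mul, hgsum, one_mul]
        simp only [mul_add, mul_sub, Finset.sum_add_distrib, Finset.sum_sub_distrib]
        rw [hconst]
      rw [hU, EJS]
      rw [← Finset.sum_sub_distrib]
      refine Finset.sum_congr rfl fun i _ => ?_
      rw [hKL i, Real.logb_div (hspos i).ne' (hρ0 i).ne', hEdef]
      ring
    rw [hL, hR]
  calc ∑ x, P x * ∑ y, (∑ i, ρ i * f (h i x) y) * U (Φ x y)
      = ∑ x, (P x * U ρ - P x * EJS f h ρ x) := by
        refine Finset.sum_congr rfl fun x _ => ?_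
        rw [key x]; ring
    _ = U ρ - ∑ x, P x * EJS f h ρ x := by
        rw [Finset.sum_sub_distrib, ← Finset.sum_mul, hP1, one_mul]
end
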